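/- For general n, s ≥ 1, α ∈ ℝ, x ∈ ℝ^n, and s+1 ≤ k ≤ n−1, the Newton-type inequality S_{k;s}(x)² ≥ S_{k-1;s}(x)S_{k+1;s}(x) holds, where S_{m;s}(x) = ∑_{i=0}^s C(s,i)α^i E_{m-i}(x). -/

import Mathlib

/-- The k-th elementary symmetric polynomial of `x : Fin n → ℝ`, with the
conventions `σ_0 = 1` and `σ_k = 0` for `k < 0` or `k > n`. -/
noncomputable def esymm (n : ℕ) (x : Fin n → ℝ) (k : ℤ) : ℝ :=
  if 0 ≤ k then ∑ s ∈ (Finset.univ : Finset (Fin n)).powersetCard k.toNat, ∏ i ∈ s, x i else 0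

/-- The normalized elementary symmetric mean `E_k(x) = σ_k(x) / C(n,k)`. -/
noncomputable def Esymm (n : ℕ) (x : Fin n → ℝ) (k : ℤ) : ℝ :=
  esymm n x k / (n.choose k.toNat)


/-- `S_{m;s}(x) = ∑_{i=0}^{s} C(s,i) α^i E_{m-i}(x)`. -/
noncomputable def Ss (n : ℕ) (α : ℝ) (x : Fin n → ℝ) (s : ℕ) (m : ℤ) : ℝ :=
  ∑ i ∈ Finset.range (s + 1), (s.choose i : ℝ) * α ^ i * Esymm n x (m - i)


/-!
Write `b_j := S_{n-j;s}(x)`. For `s = 0` the numbers `C(n,j) b_j` are the coefficients of the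
real-rooted polynomial `∏ (X + x_i)`. Going from `s` to `s + 1` replaces `b_j` by
`b_j + α b_{j+1}`, and on `f = ∑ C(d,j) b_j X^j` this is, up to the factor `d`, the polar
derivative `d f + (α - X) f'`. Polar derivatives preserve real-rootedness: after translating by `α`
the polar derivative is `reflect ∘ derivative ∘ reflect`, and derivatives of real-rooted
polynomials are real-rooted by Rolle's theorem.

Newton's inequality `b_j b_{j+2} ≤ b_{j+1}^2` holds for the binomially normalised coefficients of
every real-rooted polynomial: the derivative shifts the sequence and the polar derivative at `0`
truncates it, both keeping real-rootedness, which reduces it to a quadratic, where it is the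
nonnegativity of the discriminant.
-/

open Polynomial

namespace Polynomial

theorem Splits.reverse {K : Type*} [Field K] {f : K[X]} (hf : f.Splits) : f.reverse.Splits := by
  have h_of_le_one (g : K[X]) (hg : g.natDegree ≤ 1) : g.reverse.Splits :=
    .of_natDegree_le_one ((reverse_natDegree_le g).trans hg)
  refine Submonoid.closure_induction ?_ (h_of_le_one 1 (by simp))
    (fun f g _ _ hf hg ↦ reverse_mul_of_domain f g ▸ hf.mul hg) hf
  rintro f (⟨a, rfl⟩ | ⟨a, rfl⟩) <;> exact h_of_le_one _ (by simp)

theorem Splits.reflect {K : Type*} [Field K] {f : K[X]} {N : ℕ} (hf : f.Splits)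
    (hN : f.natDegree ≤ N) : (reflect N f).Splits := by
  obtain ⟨m, rfl⟩ := Nat.exists_eq_add_of_le hN
  have h := reflect_mul f 1 le_rfl (natDegree_one.trans_le m.zero_le)
  rw [mul_one, reflect_one] at h
  rw [h]
  exact hf.reverse.mul (Splits.X_pow m)

theorem Splits.derivative {f : ℝ[X]} (hf : f.Splits) : (Polynomial.derivative f).Splits := by
  rw [splits_iff_card_roots] at hf ⊢
  have := card_roots_le_derivative f
  have := card_roots' (Polynomial.derivative f)
  have := natDegree_derivative_le f
  omega

section PolarDeriv

variable {R : Type*} [CommRing R]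

noncomputable def polarDeriv (d : ℕ) (α : R) (f : R[X]) : R[X] :=
  C (d : R) * f + (C α - X) * derivative f

theorem coeff_polarDeriv (d : ℕ) (α : R) (f : R[X]) (j : ℕ) :
    (polarDeriv d α f).coeff j = (d - j) * f.coeff j + α * (j + 1) * f.coeff (j + 1) := by
  rcases j with _ | j
  · simp [polarDeriv, coeff_derivative]
  · simp only [polarDeriv, map_natCast, sub_mul, coeff_add, coeff_natCast_mul, coeff_sub,
      coeff_C_mul, coeff_derivative, Nat.cast_add, Nat.cast_one, coeff_X_mul]
    ring

theorem natDegree_polarDeriv_le {d : ℕ} (α : R) {f : R[X]} (hf : f.natDegree ≤ d) :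
    (polarDeriv d α f).natDegree ≤ d - 1 := by
  refine natDegree_le_iff_coeff_eq_zero.mpr fun j hj ↦ ?_
  rw [coeff_polarDeriv, coeff_eq_zero_of_natDegree_lt (by omega : f.natDegree < j + 1)]
  rcases (show d ≤ j by omega).eq_or_lt with rfl | hdj
  · simp
  · simp [coeff_eq_zero_of_natDegree_lt (hf.trans_lt hdj)]

theorem polarDeriv_eq_comp (d : ℕ) (α : R) (f : R[X]) :
    polarDeriv d α f = (polarDeriv d 0 (f.comp (X + C α))).comp (X - C α) := by
  have h : (X + C α).comp (X - C α) = (X : R[X]) := by simp [add_comp]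
  simp only [polarDeriv, map_natCast, map_zero, zero_sub, derivative_comp, derivative_add,
    derivative_X, derivative_C, add_zero, one_mul, neg_mul, add_comp, mul_comp, natCast_comp,
    comp_assoc, h, comp_X, neg_comp, X_comp, add_right_inj]
  ring

theorem polarDeriv_zero_eq_reflect {d : ℕ} {f : R[X]} (hf : f.natDegree ≤ d + 1) :
    polarDeriv (d + 1) 0 f = reflect d (derivative (reflect (d + 1) f)) := by
  ext j
  rw [coeff_polarDeriv, coeff_reflect, coeff_derivative, coeff_reflect]
  by_cases hj : j ≤ d
  · rw [revAt_le hj, revAt_le (by omega), show d + 1 - (d - j + 1) = j by omega]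
    push_cast [hj]
    ring
  · rw [revAt_eq_self_of_lt (by omega : d < j), revAt_eq_self_of_lt (by omega : d + 1 < j + 1),
      coeff_eq_zero_of_natDegree_lt (by omega : f.natDegree < j + 1)]
    rcases (show d + 1 ≤ j by omega).eq_or_lt with rfl | hdj
    · simp
    · simp [coeff_eq_zero_of_natDegree_lt (hf.trans_lt hdj)]

end PolarDeriv

theorem Splits.polarDeriv {f : ℝ[X]} {d : ℕ} (hf : f.Splits) (hd : f.natDegree ≤ d + 1) (α : ℝ) :
    (polarDeriv (d + 1) α f).Splits := by
  have hdα : (f.comp (X + C α)).natDegree ≤ d + 1 := by simpa [natDegree_comp] using hd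
  rw [polarDeriv_eq_comp, polarDeriv_zero_eq_reflect hdα]
  have hreflect := natDegree_reflect_le (N := d + 1) (p := f.comp (X + C α))
  refine ((((hf.comp_X_add_C α).reflect hdα).derivative).reflect ?_).comp_X_sub_C α
  exact (natDegree_derivative_le _).trans (by omega)

end Polynomial

def RealRootedBinomialCoeffs (N : ℕ) (b : ℕ → ℝ) : Prop :=
  ∃ f : ℝ[X], f.Splits ∧ f.natDegree ≤ N ∧ ∀ j ≤ N, f.coeff j = N.choose j * b j

namespace RealRootedBinomialCoeffs

variable {N : ℕ} {b : ℕ → ℝ}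

theorem shift (h : RealRootedBinomialCoeffs (N + 1) b) :
    RealRootedBinomialCoeffs N (fun j ↦ b (j + 1)) := by
  obtain ⟨f, hf, hdeg, hcoeff⟩ := h
  refine ⟨C ((N : ℝ) + 1)⁻¹ * derivative f, hf.derivative.C_mul _,
    (natDegree_C_mul_le _ _).trans ((natDegree_derivative_le f).trans (by omega)), fun j hj ↦ ?_⟩
  have hchoose : ((N + 1).choose (j + 1) : ℝ) * (j + 1) = (N + 1) * N.choose j := by
    exact_mod_cast (Nat.add_one_mul_choose_eq N j).symm
  rw [coeff_C_mul, coeff_derivative, hcoeff (j + 1) (by omega)]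
  field_simp
  linear_combination b (j + 1) * hchoose

theorem polar (h : RealRootedBinomialCoeffs (N + 1) b) (α : ℝ) :
    RealRootedBinomialCoeffs N (fun j ↦ b j + α * b (j + 1)) := by
  obtain ⟨f, hf, hdeg, hcoeff⟩ := h
  refine ⟨C ((N : ℝ) + 1)⁻¹ * polarDeriv (N + 1) α f, (hf.polarDeriv hdeg α).C_mul _,
    (natDegree_C_mul_le _ _).trans (natDegree_polarDeriv_le α hdeg), fun j hj ↦ ?_⟩
  have hchoose : ((N + 1).choose (j + 1) : ℝ) * (j + 1) = (N + 1) * N.choose j := by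
    exact_mod_cast (Nat.add_one_mul_choose_eq N j).symm
  have hchoose_self : ((N + 1).choose j : ℝ) * (N + 1 - j) = N.choose j * (N + 1) := by
    have := congrArg (Nat.cast : ℕ → ℝ) (Nat.choose_mul_succ_eq N j)
    push_cast [Nat.cast_sub (show j ≤ N + 1 by omega)] at this
    exact this.symm
  rw [coeff_C_mul, coeff_polarDeriv, hcoeff j (by omega), hcoeff (j + 1) (by omega)]
  field_simp
  push_cast
  linear_combination b j * hchoose_self + α * b (j + 1) * hchoose

theorem newton_two (h : RealRootedBinomialCoeffs 2 b) : b 0 * b 2 ≤ b 1 ^ 2 := by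
  obtain ⟨f, hf, hdeg, hcoeff⟩ := h
  by_cases hb2 : b 2 = 0
  · simp [hb2, sq_nonneg]
  have hf2 : f.coeff 2 ≠ 0 := by simpa [hcoeff 2 le_rfl] using hb2
  obtain ⟨r, hr⟩ := hf.exists_eval_eq_zero fun h0 ↦
    hf2 (coeff_eq_zero_of_degree_lt (by rw [h0]; exact_mod_cast Nat.zero_lt_two))
  rw [eval_eq_sum_range' (by omega : f.natDegree < 3)] at hr
  simp only [Finset.sum_range_succ, Finset.sum_range_zero, hcoeff 0 (by omega), hcoeff 1 (by omega),
    hcoeff 2 le_rfl] at hr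
  have := discrim_eq_sq_of_quadratic_eq_zero (a := b 2) (b := 2 * b 1) (c := b 0) (x := r)
    (by norm_num at hr; linear_combination hr)
  rw [discrim] at this
  nlinarith [sq_nonneg (2 * b 2 * r + 2 * b 1)]

theorem newton (h : RealRootedBinomialCoeffs N b) {j : ℕ} (hj : j + 2 ≤ N) :
    b j * b (j + 2) ≤ b (j + 1) ^ 2 := by
  induction N generalizing b j with
  | zero => omega
  | succ N ih =>
    rcases j with _ | j
    · rcases (show 1 ≤ N by omega).eq_or_lt with rfl | hN
      · exact h.newton_two
      · simpa using ih (h.polar 0) (j := 0) (by omega)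
    · exact ih h.shift (by omega)

end RealRootedBinomialCoeffs

theorem realRootedBinomialCoeffs_Esymm (n : ℕ) (x : Fin n → ℝ) :
    RealRootedBinomialCoeffs n (fun j ↦ Esymm n x (n - j)) := by
  refine ⟨∏ i, (X + C (x i)), Splits.prod fun i _ ↦ Splits.X_add_C _, ?_, fun j hj ↦ ?_⟩
  · rw [natDegree_prod_of_monic _ _ fun i _ ↦ monic_X_add_C (x i)]
    simp
  · have hchoose : (n.choose j : ℝ) ≠ 0 := by exact_mod_cast (Nat.choose_pos hj).ne'
    rw [Finset.prod_X_add_C_coeff _ _ (by simpa using hj)]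
    simp only [Esymm, esymm, Finset.card_univ, Fintype.card_fin]
    rw [if_pos (by omega), show ((n : ℤ) - j).toNat = n - j by omega, Nat.choose_symm hj]
    field_simp

theorem Ss_succ (n : ℕ) (α : ℝ) (x : Fin n → ℝ) (s : ℕ) (m : ℤ) :
    Ss n α x (s + 1) m = Ss n α x s m + α * Ss n α x s (m - 1) := by
  have hshift : Ss n α x s m = ∑ i ∈ Finset.range (s + 1),
      (s.choose (i + 1) : ℝ) * α ^ (i + 1) * Esymm n x (m - (i + 1 : ℕ)) + Esymm n x m := by
    rw [Ss, Finset.sum_range_succ', Finset.sum_range_succ _ s]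
    simp
  have hlower : α * Ss n α x s (m - 1) = ∑ i ∈ Finset.range (s + 1),
      (s.choose i : ℝ) * α ^ (i + 1) * Esymm n x (m - (i + 1 : ℕ)) := by
    rw [Ss, Finset.mul_sum]
    refine Finset.sum_congr rfl fun i _ ↦ ?_
    rw [Nat.cast_succ, sub_add_eq_sub_sub_swap]
    ring
  rw [hshift, hlower, Ss, Finset.sum_range_succ']
  simp only [Nat.choose_succ_succ', Nat.cast_add, add_mul, Finset.sum_add_distrib, Nat.cast_one,
    Nat.choose_zero_right, pow_zero, mul_one, CharP.cast_eq_zero, sub_zero, one_mul]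
  ring

theorem realRootedBinomialCoeffs_Ss (n : ℕ) (α : ℝ) (x : Fin n → ℝ) {s : ℕ} (hs : s ≤ n) :
    RealRootedBinomialCoeffs (n - s) (fun j ↦ Ss n α x s (n - j)) := by
  induction s with
  | zero => simpa [Ss] using realRootedBinomialCoeffs_Esymm n x
  | succ s ih =>
    have h := ih (by omega)
    rw [show n - s = n - (s + 1) + 1 by omega] at h
    convert h.polar α using 2 with j
    rw [Ss_succ, Nat.cast_succ, ← sub_sub]

theorem Ss_newton_general_general (n s k : ℕ) (α : ℝ) (x : Fin n → ℝ)
    (hk1 : s + 1 ≤ k) (hk2 : k ≤ n - 1) :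
    Ss n α x s k ^ 2 ≥ Ss n α x s ((k : ℤ) - 1) * Ss n α x s ((k : ℤ) + 1) := by
  have h := (realRootedBinomialCoeffs_Ss n α x (by omega : s ≤ n)).newton
    (j := n - k - 1) (by omega)
  rw [ge_iff_le, mul_comm]
  convert h using 3 <;> omega

theorem Ss_newton_general (n s k : ℕ) (α : ℝ) (x : Fin n → ℝ)
    (hs : 1 ≤ s) (hk1 : s + 1 ≤ k) (hk2 : k ≤ n - 1) :
    Ss n α x s k ^ 2 ≥ Ss n α x s ((k : ℤ) - 1) * Ss n α x s ((k : ℤ) + 1) :=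
  Ss_newton_general_general n s k α x hk1 hk2
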